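/- arXiv:1810.09398 — 2 statements merged into one kernel-verified Lean document; each statement's English description precedes it below -/
import Mathlib

section
/- Suppose a path visits m cells of a grid of cubes of edge size ε in ℝ^d, and suppose for at least m/(3d) disjoint blocks of d consecutive cells along this cell-path all d cells contain no particle, the polygonal path passing completely through them. Then each such block contributes at least ε to the arc length: a line segment that passes completely through d contiguous cubes of a grid of side ε crosses two parallel grid hyperplanes at Euclidean distance at least ε, hence has length at least ε. -/
lemma coord_le_norm {d : ℕ} (v : EuclideanSpace ℝ (Fin d)) (i : Fin d) :
    |v i| ≤ ‖v‖ := by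
  rw [EuclideanSpace.norm_eq]
  have h1 : |v i| = Real.sqrt (|v i| ^ 2) := by
    rw [Real.sqrt_sq (abs_nonneg _)]
  rw [h1]
  apply Real.sqrt_le_sqrt
  have : |v i| ^ 2 = ‖v i‖ ^ 2 := by rw [Real.norm_eq_abs]
  rw [this]
  exact Finset.single_le_sum (f := fun j => ‖v j‖ ^ 2) (fun j _ => by positivity)
    (Finset.mem_univ i)

/-- A line segment that crosses `d+1` distinct grid hyperplanes of the grid `εℤ^d`
(each crossing recorded as a coordinate direction together with an integer level)
crosses, by pigeonhole, two parallel hyperplanes at Euclidean distance at least `ε`,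
hence has length at least `ε`.  This is the key estimate showing that a line segment
passing completely through `d` contiguous empty cubes of edge `ε` contributes at least
`ε` to the arc length. -/
theorem seg_length_ge_of_crossings {d : ℕ} (ε : ℝ) (hε : 0 < ε)
    (a b : EuclideanSpace ℝ (Fin d))
    (cross : Fin (d + 1) → Fin d × ℤ) (hinj : Function.Injective cross)
    (t : Fin (d + 1) → ℝ) (ht : ∀ j, t j ∈ Set.Icc (0 : ℝ) 1)
    (hcross : ∀ j, (a + t j • (b - a)) (cross j).1 = ε * ((cross j).2 : ℝ)) :
    ε ≤ ‖b - a‖ := by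
  obtain ⟨j, k, hjk, hdir⟩ : ∃ j k, j ≠ k ∧ (cross j).1 = (cross k).1 := by
    have hcard : Fintype.card (Fin d) < Fintype.card (Fin (d + 1)) := by
      simp
    obtain ⟨j, k, hjk, h⟩ := Fintype.exists_ne_map_eq_of_card_lt
      (fun j => (cross j).1) hcard
    exact ⟨j, k, hjk, h⟩
  set i := (cross j).1 with hi
  have hne : (cross j).2 ≠ (cross k).2 := by
    intro h
    exact hjk (hinj (Prod.ext hdir h))
  have hj := hcross j
  have hk := hcross k
  rw [← hdir] at hk
  simp only [PiLp.add_apply, PiLp.smul_apply, PiLp.sub_apply, smul_eq_mul] at hj hk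
  set c := b i - a i with hc
  rw [← hi] at hj
  have hdiff : (t j - t k) * c = ε * (((cross j).2 : ℝ) - ((cross k).2 : ℝ)) := by
    linear_combination hj - hk
  have h1 : (1 : ℝ) ≤ |((cross j).2 : ℝ) - ((cross k).2 : ℝ)| := by
    rw [← Int.cast_sub, ← Int.cast_abs]
    exact_mod_cast Int.one_le_abs (sub_ne_zero.mpr hne)
  have h2 : ε ≤ |(t j - t k) * c| := by
    rw [hdiff, abs_mul, abs_of_pos hε]
    nlinarith
  have ht1 : |t j - t k| ≤ 1 := by
    have := ht j; have := ht k
    rw [abs_le]; constructor <;> simp only [Set.mem_Icc] at * <;> linarith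
  have h3 : ε ≤ |c| := by
    rw [abs_mul] at h2
    nlinarith [abs_nonneg c, abs_nonneg (t j - t k)]
  calc ε ≤ |c| := h3
    _ = |(b - a) i| := by rw [hc]; simp [PiLp.sub_apply]
    _ ≤ ‖b - a‖ := coord_le_norm _ _
end

section
/- Let (q_1,…,q_{k_n}) be a path in ℝ^d from x to y with all steps |q_{j+1} − q_j| < δ and |x − y| > 4δ. Then there exists a subsequence x = q*_0, q*_1, …, q*_k, q*_{k+1} = y of points on the path such that δ < |q*_{i+1} − q*_i| < 4δ for every 0 ≤ i ≤ k. -/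
private lemma norm_sub_triangle' {d : ℕ} (a b c : EuclideanSpace ℝ (Fin d)) :
    ‖a - c‖ ≤ ‖a - b‖ + ‖b - c‖ := by
  have : a - c = (a - b) + (b - c) := by abel
  rw [this]; exact norm_add_le _ _

private lemma aux_well_spaced {d : ℕ} (δ : ℝ) (hδ : 0 < δ)
    (K : ℕ) (q : ℕ → EuclideanSpace ℝ (Fin d))
    (y : EuclideanSpace ℝ (Fin d)) (hy : q (K - 1) = y)
    (hstep : ∀ j, j + 1 ≤ K - 1 → ‖q (j + 1) - q j‖ < δ) :
    ∀ n m, K - 1 - m = n → m ≤ K - 1 → δ < ‖q m - y‖ →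
    ∃ (k : ℕ) (s : ℕ → EuclideanSpace ℝ (Fin d)) (ι : ℕ → ℕ),
      s 0 = q m ∧ s (k + 1) = y ∧
      StrictMonoOn ι (Set.Icc 1 k) ∧
      (∀ i, 1 ≤ i → i ≤ k → m < ι i ∧ ι i ≤ K - 1 ∧ s i = q (ι i)) ∧
      (∀ i ≤ k, δ < ‖s (i + 1) - s i‖ ∧ ‖s (i + 1) - s i‖ < 4 * δ) := by
  intro n
  induction n using Nat.strong_induction_on with
  | _ n IH =>
    intro m hn hm hfar
    by_cases hclose : ‖q m - y‖ < 4 * δ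
    · -- base case: finish with the single step to y
      refine ⟨0, fun i => if i = 0 then q m else y, fun _ => 0, by simp, by simp, ?_, ?_, ?_⟩
      · intro a ha b hb hab
        simp only [Set.mem_Icc] at ha hb; omega
      · intro i h1 h0; omega
      · intro i hi
        interval_cases i
        simp only [if_pos rfl, if_neg one_ne_zero]
        rw [norm_sub_rev]
        exact ⟨hfar, hclose⟩
    · push_neg at hclose
      classical
      have hmlt : m < K - 1 := by
        rcases lt_or_eq_of_le hm with h | h
        · exact h
        · exfalso
          rw [h, hy] at hclose
          simp only [sub_self, norm_zero] at hclose
          nlinarith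
      have hex : ∃ j, m < j ∧ j ≤ K - 1 ∧ 2 * δ < ‖q j - q m‖ := by
        refine ⟨K - 1, hmlt, le_refl _, ?_⟩
        rw [hy]
        rw [norm_sub_rev]
        nlinarith
      set j := Nat.find hex with hjdef
      obtain ⟨hj1, hj2, hj3⟩ := Nat.find_spec hex
      have hjmin : ∀ j' < j, ¬(m < j' ∧ j' ≤ K - 1 ∧ 2 * δ < ‖q j' - q m‖) :=
        fun j' hj' => Nat.find_min hex hj'
      have hj0 : 1 ≤ j := by omega
      have hprev : ‖q (j - 1) - q m‖ ≤ 2 * δ := by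
        by_cases hcase : j - 1 = m
        · rw [hcase]; simp; nlinarith
        · have := hjmin (j - 1) (by omega)
          push_neg at this
          exact this (by omega) (by omega)
      have hlt3 : ‖q j - q m‖ < 3 * δ := by
        have htri := norm_sub_triangle' (q j) (q (j - 1)) (q m)
        have hst : ‖q ((j - 1) + 1) - q (j - 1)‖ < δ := hstep (j - 1) (by omega)
        have hjj : (j - 1) + 1 = j := by omega
        rw [hjj] at hst
        linarith
      have hfarj : δ < ‖q j - y‖ := by
        have htri := norm_sub_triangle' (q m) (q j) y
        rw [norm_sub_rev (q m) (q j)] at htri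
        linarith
      obtain ⟨k', s', ι', hs0', hsk', hmono', hidx', hsp'⟩ :=
        IH (K - 1 - j) (by omega) j rfl hj2 hfarj
      refine ⟨k' + 1, fun i => if i = 0 then q m else s' (i - 1),
        fun i => if i ≤ 1 then j else ι' (i - 1), by simp, ?_, ?_, ?_, ?_⟩
      · simp only [if_neg (Nat.succ_ne_zero _)]
        simpa using hsk'
      · intro a ha b hb hab
        simp only [Set.mem_Icc] at ha hb
        by_cases ha1 : a ≤ 1
        · have hb1 : ¬ b ≤ 1 := by omega
          simp only [if_pos ha1, if_neg hb1]
          exact (hidx' (b - 1) (by omega) (by omega)).1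
        · have hb1 : ¬ b ≤ 1 := by omega
          simp only [if_neg ha1, if_neg hb1]
          exact hmono' (Set.mem_Icc.mpr ⟨by omega, by omega⟩)
            (Set.mem_Icc.mpr ⟨by omega, by omega⟩) (by omega)
      · intro i h1 hk
        by_cases hi1 : i ≤ 1
        · have hi : i = 1 := by omega
          subst hi
          simp only [if_pos (le_refl 1), if_neg one_ne_zero]
          exact ⟨hj1, hj2, by simpa using hs0'⟩
        · obtain ⟨h1', h2', h3'⟩ := hidx' (i - 1) (by omega) (by omega)
          simp only [if_neg hi1, if_neg (by omega : ¬ i = 0)]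
          exact ⟨by omega, h2', h3'⟩
      · intro i hi
        by_cases hi0 : i = 0
        · subst hi0
          norm_num [hs0']
          constructor <;> nlinarith
        · have h1 : 1 ≤ i := by omega
          simp only [if_neg (by omega : ¬ i + 1 = 0), if_neg hi0]
          have heq : i + 1 - 1 = (i - 1) + 1 := by omega
          rw [heq]
          exact hsp' (i - 1) (by omega)

/-- Extraction of a well-spaced subsequence: if `(q 0, …, q (K-1))` is a path in `ℝ^d`
from `x` to `y` with all steps of length `< δ` and `‖x − y‖ > 4δ`, then there is a
subsequence `x = s 0, s 1, …, s k, s (k+1) = y` of points of the path (taken along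
increasing indices) with `δ < ‖s (i+1) − s i‖ < 4δ` for every `0 ≤ i ≤ k`. -/
theorem exists_well_spaced_subsequence {d : ℕ} (δ : ℝ) (hδ : 0 < δ)
    (K : ℕ) (hK : 1 ≤ K) (q : ℕ → EuclideanSpace ℝ (Fin d))
    (x y : EuclideanSpace ℝ (Fin d))
    (hx : q 0 = x) (hy : q (K - 1) = y)
    (hstep : ∀ j, j + 1 ≤ K - 1 → ‖q (j + 1) - q j‖ < δ)
    (hxy : 4 * δ < ‖x - y‖) :
    ∃ (k : ℕ) (s : ℕ → EuclideanSpace ℝ (Fin d)) (ι : ℕ → ℕ),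
      s 0 = x ∧ s (k + 1) = y ∧
      StrictMonoOn ι (Set.Icc 1 k) ∧
      (∀ i, 1 ≤ i → i ≤ k → ι i ≤ K - 1 ∧ s i = q (ι i)) ∧
      (∀ i ≤ k, δ < ‖s (i + 1) - s i‖ ∧ ‖s (i + 1) - s i‖ < 4 * δ) := by
  have hfar : δ < ‖q 0 - y‖ := by rw [hx]; nlinarith
  obtain ⟨k, s, ι, h0, h1, h2, h3, h4⟩ :=
    aux_well_spaced δ hδ K q y hy hstep (K - 1 - 0) 0 rfl (Nat.zero_le _) hfar
  exact ⟨k, s, ι, by rw [h0, hx], h1, h2, fun i hi hik => ⟨(h3 i hi hik).2.1, (h3 i hi hik).2.2⟩, h4⟩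
end
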